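/- Let A be a uniform algebra on a compact metric space K. If K contains an analytic disc, i.e., there is a continuous injective map σ : D → K from the open unit disc D in C such that f ∘ σ is holomorphic on D for every f in A, then A does not have the countable approximation property. Equivalently: if A has the countable approximation property, then K contains no analytic disc. -/

import Mathlib

/-!
By Tietze, some `g ∈ C(K)` satisfies `g ∘ σ = conj` on the closed disc of radius `1/2`. If `A`
had the countable approximation property, `g` would be approximable on compact sets `M n`
covering `K`, and by Baire category some `σ⁻¹(M n)` would contain a nonempty open subset `V` of
that disc. On `V`, `g ∘ σ = conj` would then be a uniform limit of the holomorphic functions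
`f ∘ σ`, `f ∈ A`, hence holomorphic, which it is not.
-/

open Metric

/-- The uniform algebra `A` on the compact space `K` has the countable approximation
property: for each continuous `g` on `K` there are countably many compact subsets
`M n` covering `K` such that `g|‖M n‖` lies in the uniform closure of `A|‖M n‖`. -/
def CountableApproxProperty {K : Type*} [TopologicalSpace K]
    (A : Subalgebra ℂ C(K, ℂ)) : Prop :=
  ∀ g : C(K, ℂ), ∃ M : ℕ → Set K, (∀ n, IsCompact (M n)) ∧ (⋃ n, M n) = Set.univ ∧
    ∀ n, g.restrict (M n) ∈
      closure ((fun f : C(K, ℂ) => f.restrict (M n)) '' (A : Set C(K, ℂ)))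

open Set Filter ComplexConjugate

theorem Complex.not_differentiableAt_conj (z : ℂ) :
    ¬ DifferentiableAt ℂ (conj : ℂ → ℂ) z := by
  intro h
  have hL := (h.hasFDerivAt.restrictScalars ℝ).unique (Complex.conjCLE.hasFDerivAt (x := z))
  have h1 := congr($hL 1)
  have hI := congr($hL Complex.I)
  simp only [ContinuousLinearMap.coe_restrictScalars', ContinuousLinearEquiv.coe_coe,
    Complex.conjCLE_apply, map_one, Complex.conj_I] at h1 hI
  -- the ℂ-linear derivative `D` has `D I = I * D 1 = I`, but `D = conj` over ℝ gives `D I = -I`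
  rw [← mul_one Complex.I, ← smul_eq_mul, map_smul, h1] at hI
  norm_num [Complex.ext_iff] at hI

theorem IsCompact.exists_continuousMap_comp_eqOn.{u, v} {X : Type*} {K : Type u} {Y : Type v}
    [TopologicalSpace X] [TopologicalSpace K] [T2Space K] [NormalSpace K] [TopologicalSpace Y]
    [TietzeExtension.{u, v} Y] {S : Set X} (hS : IsCompact S) {σ : X → K}
    (hσc : ContinuousOn σ S) (hσi : InjOn σ S) {h : X → Y} (hh : ContinuousOn h S) :
    ∃ g : C(K, Y), EqOn (g ∘ σ) h S := by
  have : CompactSpace S := isCompact_iff_compactSpace.mp hS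
  have he : Topology.IsClosedEmbedding (S.domRestrict σ) :=
    hσc.domRestrict.isClosedEmbedding hσi.injective
  obtain ⟨g, hg⟩ := ContinuousMap.exists_extension' he ⟨S.domRestrict h, hh.domRestrict⟩
  exact ⟨g, fun z hz => congrFun hg ⟨z, hz⟩⟩

theorem IsOpen.exists_isOpen_mapsTo_of_iUnion_eq_univ {X K : Type*} [TopologicalSpace X]
    [BaireSpace X] [TopologicalSpace K] {U : Set X} (hU : IsOpen U) (hne : U.Nonempty)
    {σ : X → K} (hσ : ContinuousOn σ U) {M : ℕ → Set K} (hM : ∀ n, IsClosed (M n))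
    (hcover : ⋃ n, M n = univ) :
    ∃ n, ∃ V ⊆ U, IsOpen V ∧ V.Nonempty ∧ MapsTo σ V (M n) := by
  have : BaireSpace U := hU.baireSpace
  have : Nonempty U := hne.to_subtype
  obtain ⟨n, x, hx⟩ := nonempty_interior_of_iUnion_of_closed
    (fun n => (hM n).preimage hσ.domRestrict) (by simp [← preimage_iUnion, hcover])
  obtain ⟨W, hW, hWeq⟩ :=
    isOpen_induced_iff.mp (isOpen_interior (s := U.domRestrict σ ⁻¹' M n))
  refine ⟨n, U ∩ W, inter_subset_left, hU.inter hW, ⟨x, x.2, ?_⟩, ?_⟩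
  · rwa [← hWeq] at hx
  · rintro y ⟨hyU, hyW⟩
    have hy : (⟨y, hyU⟩ : U) ∈ Subtype.val ⁻¹' W := hyW
    rw [hWeq] at hy
    exact interior_subset (s := U.domRestrict σ ⁻¹' M n) hy

theorem differentiableOn_comp_of_restrict_mem_closure {K : Type*} [TopologicalSpace K]
    {A : Set C(K, ℂ)} {M : Set K} (hM : IsCompact M) {g : C(K, ℂ)}
    (hg : g.restrict M ∈ closure ((fun f : C(K, ℂ) => f.restrict M) '' A))
    {σ : ℂ → K} {V : Set ℂ} (hV : IsOpen V) (hσV : MapsTo σ V M)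
    (hA : ∀ f ∈ A, DifferentiableOn ℂ (fun z => f (σ z)) V) :
    DifferentiableOn ℂ (fun z => g (σ z)) V := by
  have : CompactSpace M := isCompact_iff_compactSpace.mp hM
  obtain ⟨F, hFA, hFg⟩ := mem_closure_iff_seq_limit.mp hg
  choose f hfA hfF using hFA
  have hunif : TendstoUniformlyOn (fun m => ⇑(f m)) g atTop M := by
    rw [tendstoUniformlyOn_iff_tendstoUniformly_comp_coe]
    have hF := ContinuousMap.tendsto_iff_tendstoUniformly.mp hFg
    simp only [← hfF] at hF
    exact hF
  exact ((hunif.comp σ).mono hσV).tendstoLocallyUniformlyOn.differentiableOn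
    (Eventually.of_forall fun m => hA _ (hfA m)) hV

theorem stmt_8_general {K : Type*} [MetricSpace K]
    (A : Subalgebra ℂ C(K, ℂ))
    (σ : ℂ → K) (hσc : ContinuousOn σ (ball (0 : ℂ) 1))
    (hσi : Set.InjOn σ (ball (0 : ℂ) 1))
    (hσh : ∀ f ∈ A, DifferentiableOn ℂ (fun z => f (σ z)) (ball (0 : ℂ) 1)) :
    ¬ CountableApproxProperty A := by
  intro hCAP
  have hdisc : closedBall (0 : ℂ) (1 / 2) ⊆ ball 0 1 := closedBall_subset_ball (by norm_num)
  obtain ⟨g, hg⟩ := (isCompact_closedBall (0 : ℂ) (1 / 2)).exists_continuousMap_comp_eqOn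
    (hσc.mono hdisc) (hσi.mono hdisc) Complex.continuous_conj.continuousOn
  obtain ⟨M, hMc, hMcover, hMg⟩ := hCAP g
  obtain ⟨n, V, hV, hVo, ⟨z, hz⟩, hVM⟩ :=
    isOpen_ball.exists_isOpen_mapsTo_of_iUnion_eq_univ ⟨0, mem_ball_self one_half_pos⟩
      (hσc.mono (ball_subset_closedBall.trans hdisc)) (fun n => (hMc n).isClosed) hMcover
  have hVdisc : V ⊆ closedBall 0 (1 / 2) := hV.trans ball_subset_closedBall
  have hgσ : DifferentiableOn ℂ (fun z => g (σ z)) V :=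
    differentiableOn_comp_of_restrict_mem_closure (hMc n) (hMg n) hVo hVM
      fun f hf => (hσh f hf).mono (hVdisc.trans hdisc)
  have hconj : DifferentiableOn ℂ (conj : ℂ → ℂ) V :=
    hgσ.congr fun w hw => (hg (hVdisc hw)).symm
  exact Complex.not_differentiableAt_conj z (hconj.differentiableAt (hVo.mem_nhds hz))

/-- Let `A` be a uniform algebra on a compact metric space `K`.  If `K`
contains an analytic disc — a continuous injective map `σ` from the open unit disc
`D ⊆ ℂ` into `K` such that `f ∘ σ` is holomorphic on `D` for every `f ∈ A` — then
`A` does not have the countable approximation property. -/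
theorem stmt_8 {K : Type*} [MetricSpace K] [CompactSpace K]
    (A : Subalgebra ℂ C(K, ℂ)) (hclosed : IsClosed (A : Set C(K, ℂ)))
    (hsep : ∀ x y : K, x ≠ y → ∃ f ∈ A, f x ≠ f y)
    (σ : ℂ → K) (hσc : ContinuousOn σ (ball (0 : ℂ) 1))
    (hσi : Set.InjOn σ (ball (0 : ℂ) 1))
    (hσh : ∀ f ∈ A, DifferentiableOn ℂ (fun z => f (σ z)) (ball (0 : ℂ) 1)) :
    ¬ CountableApproxProperty A :=
  stmt_8_general A σ hσc hσi hσh
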